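/- arXiv:2008.11117 — 5 statements merged into one kernel-verified Lean document; each statement's English description precedes it below -/
import Mathlib

section
/- Let f : ℝⁿ → ℝ be differentiable with L-Lipschitz gradient, let g ∈ ℝⁿ with ‖g‖_∞ ≤ η, let Δ₁, …, Δₙ be independent Bernoulli variables with P[Δᵢ=1] = |gᵢ|/η, and define the random point X = x − α Σᵢ sgn(gᵢ) Δᵢ eᶦ. Then E[f(X)] ≤ f(x) + (Lα²)/(2η) · ‖g‖₁ − (α/η) ⟨g, ∇f(x)⟩. -/
open scoped RealInnerProductSpace

noncomputable def bernWeight {n : ℕ} (p : Fin n → ℝ) (s : Fin n → Bool) : ℝ :=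
  ∏ i, if s i then p i else 1 - p i

noncomputable def bernExp {n : ℕ} (p : Fin n → ℝ) (h : (Fin n → Bool) → ℝ) : ℝ :=
  ∑ s : Fin n → Bool, bernWeight p s * h s

/-- One step of SMGD from `x` with step `α`, gradient estimate `g` and Bernoulli
outcomes `s`. -/
noncomputable def smgdStep {n : ℕ} (x : EuclideanSpace ℝ (Fin n)) (α : ℝ)
    (g : Fin n → ℝ) (s : Fin n → Bool) : EuclideanSpace ℝ (Fin n) :=
  x - α • ∑ i, (Real.sign (g i) * (if s i then 1 else 0)) • EuclideanSpace.single i (1 : ℝ)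


/-! The descent lemma `f (x + v) ≤ f x + ⟪∇f x, v⟫ + L/2 ‖v‖²` bounds `f` at the SMGD step by an
expression that is affine in the Bernoulli indicators `Δᵢ` (because `Δᵢ² = Δᵢ`), so its expectation
is obtained by substituting `Δᵢ ↦ |gᵢ|/η`; then `sgn(gᵢ)|gᵢ| = gᵢ` and `sgn(gᵢ)²|gᵢ| = |gᵢ|`. -/

theorem hasDerivAt_comp_add_smul {E : Type*} [NormedAddCommGroup E] [InnerProductSpace ℝ E]
    [CompleteSpace E] {f : E → ℝ} (hf : Differentiable ℝ f) (x v : E) (t : ℝ) :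
    HasDerivAt (fun t : ℝ => f (x + t • v)) ⟪gradient f (x + t • v), v⟫ t := by
  have hline : HasDerivAt (fun t : ℝ => x + t • v) v t := by
    simpa using ((hasDerivAt_id t).smul_const v).const_add x
  simpa [Function.comp_def] using
    (hf (x + t • v)).hasGradientAt.hasFDerivAt.comp_hasDerivAt t hline

theorem le_add_inner_gradient_add_sq_norm {E : Type*} [NormedAddCommGroup E]
    [InnerProductSpace ℝ E] [CompleteSpace E] {f : E → ℝ} {L : ℝ} {x : E}
    (hf : Differentiable ℝ f) (hlip : ∀ y, ‖gradient f y - gradient f x‖ ≤ L * ‖y - x‖)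
    (v : E) : f (x + v) ≤ f x + ⟪gradient f x, v⟫ + L / 2 * ‖v‖ ^ 2 := by
  set φ : ℝ → ℝ := fun t => f (x + t • v) - t * ⟪gradient f x, v⟫ - L / 2 * t ^ 2 * ‖v‖ ^ 2
  have hφ : ∀ t, HasDerivAt φ
      (⟪gradient f (x + t • v), v⟫ - ⟪gradient f x, v⟫ - L * t * ‖v‖ ^ 2) t := by
    intro t
    refine (((hasDerivAt_comp_add_smul hf x v t).sub
      ((hasDerivAt_id' t).mul_const ⟪gradient f x, v⟫)).sub
      (((hasDerivAt_pow 2 t).const_mul (L / 2)).mul_const (‖v‖ ^ 2))).congr_deriv ?_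
    push_cast; ring
  have hφ' : ∀ t ∈ Set.Ioo (0 : ℝ) 1,
      ⟪gradient f (x + t • v), v⟫ - ⟪gradient f x, v⟫ ≤ L * t * ‖v‖ ^ 2 := by
    intro t ht
    calc ⟪gradient f (x + t • v), v⟫ - ⟪gradient f x, v⟫
        = ⟪gradient f (x + t • v) - gradient f x, v⟫ := (inner_sub_left _ _ _).symm
      _ ≤ ‖gradient f (x + t • v) - gradient f x‖ * ‖v‖ := real_inner_le_norm _ _
      _ ≤ L * ‖t • v‖ * ‖v‖ := by
          gcongr; simpa using hlip (x + t • v)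
      _ = L * t * ‖v‖ ^ 2 := by rw [norm_smul, Real.norm_of_nonneg ht.1.le]; ring
  have hanti : AntitoneOn φ (Set.Icc 0 1) := by
    refine antitoneOn_of_hasDerivWithinAt_nonpos (convex_Icc 0 1)
      (fun t _ => (hφ t).continuousAt.continuousWithinAt)
      (fun t _ => (hφ t).hasDerivWithinAt) ?_
    rw [interior_Icc]
    exact fun t ht => sub_nonpos.2 (hφ' t ht)
  have hφ01 := hanti (by simp) (by simp) zero_le_one
  simp only [φ, zero_smul, add_zero, one_smul] at hφ01
  linarith

section Bernoulli

variable {n : ℕ} (p : Fin n → ℝ)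

theorem sum_bernWeight : ∑ s, bernWeight p s = 1 := by
  simpa [bernWeight] using (Fintype.prod_sum fun i (b : Bool) => if b then p i else 1 - p i).symm

theorem sum_bernWeight_mul_ite (i : Fin n) :
    ∑ s, bernWeight p s * (if s i then 1 else 0) = p i := by
  -- the indicator of `s i` is absorbed into the `i`-th factor, so the summand still factors
  set F : Fin n → Bool → ℝ := fun j b =>
    (if b then p j else 1 - p j) * if j = i then (if b then 1 else 0) else 1
  have hF : ∀ s : Fin n → Bool, bernWeight p s * (if s i then 1 else 0) = ∏ j, F j (s j) := by
    intro s
    simp only [F, bernWeight, Finset.prod_mul_distrib, Finset.prod_ite_eq', Finset.mem_univ,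
      if_true]
  have hFi : ∀ j, ∑ b, F j b = if j = i then p j else 1 := by
    intro j
    by_cases h : j = i <;> simp [F, h]
  simp only [hF, ← Fintype.prod_sum, hFi, Finset.prod_ite_eq', Finset.mem_univ, if_true]

theorem bernExp_affine (a : ℝ) (c : Fin n → ℝ) :
    bernExp p (fun s => a + ∑ i, c i * (if s i then 1 else 0)) = a + ∑ i, c i * p i := by
  simp only [bernExp, mul_add, Finset.sum_add_distrib, ← Finset.sum_mul, sum_bernWeight,
    one_mul, Finset.mul_sum]
  rw [Finset.sum_comm]
  congr 1
  refine Finset.sum_congr rfl fun i _ => ?_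
  simp only [mul_left_comm _ (c i), ← Finset.mul_sum, sum_bernWeight_mul_ite]

variable {p}

theorem bernWeight_nonneg (hp : ∀ i, p i ∈ Set.Icc 0 1) (s : Fin n → Bool) :
    0 ≤ bernWeight p s :=
  Finset.prod_nonneg fun i _ => by
    split_ifs
    · exact (hp i).1
    · exact sub_nonneg.2 (hp i).2

theorem bernExp_mono (hp : ∀ i, p i ∈ Set.Icc 0 1) {h₁ h₂ : (Fin n → Bool) → ℝ}
    (h : ∀ s, h₁ s ≤ h₂ s) : bernExp p h₁ ≤ bernExp p h₂ :=
  Finset.sum_le_sum fun s _ => mul_le_mul_of_nonneg_left (h s) (bernWeight_nonneg hp s)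

end Bernoulli

theorem EuclideanSpace.sum_smul_single_one {𝕜 ι : Type*} [RCLike 𝕜] [Fintype ι] [DecidableEq ι]
    (c : ι → 𝕜) : ∑ i, c i • EuclideanSpace.single i (1 : 𝕜) = WithLp.toLp 2 c := by
  simpa using (EuclideanSpace.basisFun ι 𝕜).sum_repr (WithLp.toLp 2 c)

theorem apply_smgdStep_le {n : ℕ} {f : EuclideanSpace ℝ (Fin n) → ℝ} {L : ℝ}
    {x : EuclideanSpace ℝ (Fin n)} (hf : Differentiable ℝ f)
    (hlip : ∀ y, ‖gradient f y - gradient f x‖ ≤ L * ‖y - x‖)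
    (α : ℝ) (g : Fin n → ℝ) (s : Fin n → Bool) :
    f (smgdStep x α g s) ≤ f x + ∑ i,
      (L / 2 * α ^ 2 * Real.sign (g i) ^ 2 - α * Real.sign (g i) * gradient f x i) *
        (if s i then 1 else 0) := by
  set d : Fin n → ℝ := fun i => Real.sign (g i) * if s i then 1 else 0
  have hstep : smgdStep x α g s = x + -(α • WithLp.toLp 2 d) := by
    rw [smgdStep, EuclideanSpace.sum_smul_single_one, sub_eq_add_neg]
  have hinner : ⟪gradient f x, -(α • WithLp.toLp 2 d)⟫ = -α * ∑ i, gradient f x i * d i := by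
    rw [inner_neg_right, real_inner_smul_right, neg_mul, PiLp.inner_apply]
    simp only [RCLike.inner_apply, conj_trivial, mul_comm (d _)]
  have hnorm : ‖-(α • WithLp.toLp 2 d)‖ ^ 2 = α ^ 2 * ∑ i, d i ^ 2 := by
    rw [norm_neg, norm_smul, mul_pow, Real.norm_eq_abs, sq_abs, EuclideanSpace.real_norm_sq_eq]
  have hd : ∀ i, d i ^ 2 = Real.sign (g i) ^ 2 * if s i then 1 else 0 := by
    intro i; split_ifs <;> simp [d, *]
  calc f (smgdStep x α g s)
      ≤ f x + ⟪gradient f x, -(α • WithLp.toLp 2 d)⟫ + L / 2 * ‖-(α • WithLp.toLp 2 d)‖ ^ 2 := by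
        rw [hstep]; exact le_add_inner_gradient_add_sq_norm hf hlip _
    _ = _ := by
        simp only [hinner, hnorm, hd, Finset.mul_sum, add_assoc, ← Finset.sum_add_distrib]
        congr 1
        refine Finset.sum_congr rfl fun i _ => ?_
        ring

theorem Real.sign_mul_abs (r : ℝ) : Real.sign r * |r| = r := by
  rcases lt_trichotomy r 0 with h | rfl | h
  · rw [Real.sign_of_neg h, abs_of_neg h, neg_one_mul, neg_neg]
  · simp
  · rw [Real.sign_of_pos h, abs_of_pos h, one_mul]

theorem Real.sign_sq_mul_abs (r : ℝ) : Real.sign r ^ 2 * |r| = |r| := by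
  rcases lt_trichotomy r 0 with h | rfl | h
  · rw [Real.sign_of_neg h]; ring
  · simp
  · rw [Real.sign_of_pos h]; ring

theorem stmt_4_general (n : ℕ) (f : EuclideanSpace ℝ (Fin n) → ℝ) (L α η : ℝ)
    (hdiff : Differentiable ℝ f)
    (hlip : ∀ x y : EuclideanSpace ℝ (Fin n), ‖gradient f x - gradient f y‖ ≤ L * ‖x - y‖)
    (x : EuclideanSpace ℝ (Fin n)) (g : Fin n → ℝ) (hg : ∀ i, |g i| ≤ η) :
    bernExp (fun i => |g i| / η) (fun s => f (smgdStep x α g s))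
      ≤ f x + L * α ^ 2 / (2 * η) * (∑ i, |g i|)
          - (α / η) * ∑ i, g i * gradient f x i := by
  have hp : ∀ i, |g i| / η ∈ Set.Icc 0 1 := fun i =>
    have hη : 0 ≤ η := (abs_nonneg _).trans (hg i)
    ⟨div_nonneg (abs_nonneg _) hη, div_le_one_of_le₀ (hg i) hη⟩
  calc _ ≤ _ := bernExp_mono hp fun s => apply_smgdStep_le hdiff (fun y => hlip y x) α g s
    _ = _ := bernExp_affine _ _ _
    _ = _ := by
      rw [Finset.mul_sum, Finset.mul_sum, add_sub_assoc, ← Finset.sum_sub_distrib]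
      congr 1
      refine Finset.sum_congr rfl fun i _ => ?_
      linear_combination (L * α ^ 2 / (2 * η)) * Real.sign_sq_mul_abs (g i)
        - (α / η * gradient f x i) * Real.sign_mul_abs (g i)

theorem stmt_4 (n : ℕ) (f : EuclideanSpace ℝ (Fin n) → ℝ) (L α η : ℝ)
    (hL : 0 ≤ L) (hα : 0 < α) (hη : 0 < η)
    (hdiff : Differentiable ℝ f)
    (hlip : ∀ x y : EuclideanSpace ℝ (Fin n), ‖gradient f x - gradient f y‖ ≤ L * ‖x - y‖)
    (x : EuclideanSpace ℝ (Fin n)) (g : Fin n → ℝ) (hg : ∀ i, |g i| ≤ η) :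
    bernExp (fun i => |g i| / η) (fun s => f (smgdStep x α g s))
      ≤ f x + L * α ^ 2 / (2 * η) * (∑ i, |g i|)
          - (α / η) * ∑ i, g i * gradient f x i :=
  stmt_4_general n f L α η hdiff hlip x g hg
end

section
/- Let f = (1/m) Σ_{i=1}^m fᶦ with each fᶦ : ℝⁿ → ℝ differentiable, and for 1 ≤ k ≤ m let the mini-batch estimator of size k be G_k(x) = (1/k) Σ_{i ∈ A} ∇fᶦ(x) where A is a uniformly random k-element subset of {1,…,m}. Then for any norm ‖·‖ on ℝⁿ, any x, and 2 ≤ k ≤ m: E[‖G_k(x)‖] ≤ E[‖G_{k−1}(x)‖]. -/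
/-!
The mean of `g` over a `(k+1)`-set `A` is the mean of the `k+1` leave-one-out means over
`A.erase j`, so by the triangle inequality its seminorm is at most the average of their seminorms.
Averaging over `A`, every `k`-set `B` occurs as `A.erase j` for exactly `n - k` pairs `(A, j)`, and
`C(n, k+1) (k+1) = C(n, k) (n - k)` turns the resulting weights into the uniform ones on `k`-sets.
-/

open Finset

namespace Finset

variable {α M : Type*} [DecidableEq α]

theorem sum_sum_erase [AddCommMonoid M] (s : Finset α) (f : α → M) :
    ∑ j ∈ s, ∑ i ∈ s.erase j, f i = (#s - 1) • ∑ i ∈ s, f i := by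
  rw [sum_comm' (t' := s) (s' := fun i => s.erase i) (by grind), smul_sum]
  exact sum_congr rfl fun i hi => by rw [sum_const, card_erase_of_mem hi]

theorem sum_powersetCard_succ_sum_erase [AddCommMonoid M] (s : Finset α) (k : ℕ)
    (h : Finset α → M) :
    ∑ A ∈ s.powersetCard (k + 1), ∑ j ∈ A, h (A.erase j) =
      (#s - k) • ∑ B ∈ s.powersetCard k, h B := by
  calc ∑ A ∈ s.powersetCard (k + 1), ∑ j ∈ A, h (A.erase j)
      = ∑ A ∈ s.powersetCard k, ∑ j ∈ s \ A, h A := by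
        rw [sum_sigma', sum_sigma']
        apply sum_bij' (fun p _ => ⟨p.1.erase p.2, p.2⟩) (fun p _ => ⟨insert p.2 p.1, p.2⟩)
        · rintro ⟨A, j⟩ hp
          simp [insert_erase (mem_sigma.1 hp).2]
        · rintro ⟨B, j⟩ hp
          simp [erase_insert (mem_sdiff.1 (mem_sigma.1 hp).2).2]
        all_goals grind
    _ = (#s - k) • ∑ B ∈ s.powersetCard k, h B := by
        rw [smul_sum]
        refine sum_congr rfl fun B hB => ?_
        rw [sum_const, card_sdiff_of_subset (mem_powersetCard.1 hB).1, (mem_powersetCard.1 hB).2]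

end Finset

theorem Seminorm.map_avg_le_avg_map_avg_erase {ι E : Type*} [DecidableEq ι] [AddCommGroup E]
    [Module ℝ E] (p : Seminorm ℝ E) (g : ι → E) {s : Finset ι} {k : ℕ} (hk : k ≠ 0)
    (hs : #s = k + 1) :
    p ((1 / (k + 1 : ℝ)) • ∑ i ∈ s, g i) ≤
      (1 / (k + 1 : ℝ)) * ∑ j ∈ s, p ((1 / (k : ℝ)) • ∑ i ∈ s.erase j, g i) := by
  have h_avg : ∑ j ∈ s, (1 / (k : ℝ)) • ∑ i ∈ s.erase j, g i = ∑ i ∈ s, g i := by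
    rw [← smul_sum, sum_sum_erase, hs, Nat.add_sub_cancel, ← Nat.cast_smul_eq_nsmul ℝ, smul_smul,
      one_div, inv_mul_cancel₀ (Nat.cast_ne_zero.2 hk), one_smul]
  calc p ((1 / (k + 1 : ℝ)) • ∑ i ∈ s, g i)
      = (1 / (k + 1 : ℝ)) * p (∑ j ∈ s, (1 / (k : ℝ)) • ∑ i ∈ s.erase j, g i) := by
        rw [map_smul_eq_mul, h_avg, Real.norm_of_nonneg (by positivity)]
    _ ≤ _ := by
        gcongr
        exact le_sum_of_subadditive p (map_zero p).le (map_add_le_add p) _ _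

/-- `E ‖G_k‖` for a uniformly random `k`-subset, with `g i` in place of `∇fⁱ(x)`. -/
noncomputable def expectedBatchNorm {ι E : Type*} [Fintype ι] [AddCommGroup E] [Module ℝ E]
    (p : Seminorm ℝ E) (g : ι → E) (k : ℕ) : ℝ :=
  (1 / ((Fintype.card ι).choose k : ℝ)) *
    ∑ A ∈ (univ : Finset ι).powersetCard k, p ((1 / (k : ℝ)) • ∑ i ∈ A, g i)

theorem expectedBatchNorm_succ_le {ι E : Type*} [Fintype ι] [AddCommGroup E] [Module ℝ E]
    (p : Seminorm ℝ E) (g : ι → E) {k : ℕ} (hk : k ≠ 0) :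
    expectedBatchNorm p g (k + 1) ≤ expectedBatchNorm p g k := by
  classical
  unfold expectedBatchNorm
  set n := Fintype.card ι
  rcases lt_or_ge n (k + 1) with hlt | hle
  · rw [powersetCard_eq_empty.2 (by simpa using hlt), sum_empty, mul_zero]
    exact mul_nonneg (by positivity) (sum_nonneg fun _ _ => apply_nonneg _ _)
  have hchoose : (n.choose (k + 1) : ℝ) * (k + 1) = n.choose k * (n - k : ℕ) := by
    exact_mod_cast Nat.choose_succ_right_eq n k
  have h_choose_succ_pos : (0 : ℝ) < n.choose (k + 1) := by exact_mod_cast Nat.choose_pos hle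
  have h_choose_pos : (0 : ℝ) < n.choose k := by exact_mod_cast Nat.choose_pos (by omega)
  calc (1 / (n.choose (k + 1) : ℝ)) *
        ∑ A ∈ (univ : Finset ι).powersetCard (k + 1), p ((1 / ((k + 1 : ℕ) : ℝ)) • ∑ i ∈ A, g i)
      ≤ (1 / (n.choose (k + 1) : ℝ)) * ((1 / (k + 1 : ℝ)) *
        ∑ A ∈ (univ : Finset ι).powersetCard (k + 1), ∑ j ∈ A,
          p ((1 / (k : ℝ)) • ∑ i ∈ A.erase j, g i)) := by
        push_cast
        gcongr
        rw [mul_sum]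
        exact sum_le_sum fun A hA => p.map_avg_le_avg_map_avg_erase g hk (mem_powersetCard.1 hA).2
    _ = (1 / (n.choose (k + 1) : ℝ)) * ((1 / (k + 1 : ℝ)) * ((n - k : ℕ) *
        ∑ B ∈ (univ : Finset ι).powersetCard k, p ((1 / (k : ℝ)) • ∑ i ∈ B, g i))) := by
        rw [sum_powersetCard_succ_sum_erase _ _ fun B => p ((1 / (k : ℝ)) • ∑ i ∈ B, g i),
          nsmul_eq_mul, card_univ]
    _ = _ := by
        field_simp
        rw [hchoose]
        field_simp

theorem stmt_5_general (n m : ℕ) (F : Fin m → EuclideanSpace ℝ (Fin n) → ℝ)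
    (N : EuclideanSpace ℝ (Fin n) → ℝ)
    (hN_add : ∀ a b, N (a + b) ≤ N a + N b)
    (hN_smul : ∀ (c : ℝ) a, N (c • a) = |c| * N a)
    (x : EuclideanSpace ℝ (Fin n)) (k : ℕ) (hk : 2 ≤ k) :
    (1 / (m.choose k : ℝ)) *
        ∑ A ∈ (Finset.univ : Finset (Fin m)).powersetCard k,
          N ((1 / (k : ℝ)) • ∑ i ∈ A, gradient (F i) x)
      ≤ (1 / (m.choose (k - 1) : ℝ)) *
          ∑ B ∈ (Finset.univ : Finset (Fin m)).powersetCard (k - 1),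
            N ((1 / ((k : ℝ) - 1)) • ∑ i ∈ B, gradient (F i) x) := by
  obtain ⟨j, rfl⟩ : ∃ j, k = j + 1 := ⟨k - 1, by omega⟩
  have h := expectedBatchNorm_succ_le (Seminorm.of N hN_add hN_smul)
    (fun i => gradient (F i) x) (k := j) (by omega)
  simp only [expectedBatchNorm, Fintype.card_fin, Nat.cast_add_one] at h
  simp only [Nat.add_sub_cancel, Nat.cast_add_one, add_sub_cancel_right]
  exact h

theorem stmt_5 (n m : ℕ) (hm : 2 ≤ m) (F : Fin m → EuclideanSpace ℝ (Fin n) → ℝ)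
    (hF : ∀ i, Differentiable ℝ (F i))
    (N : EuclideanSpace ℝ (Fin n) → ℝ)
    (hN_add : ∀ a b, N (a + b) ≤ N a + N b)
    (hN_smul : ∀ (c : ℝ) a, N (c • a) = |c| * N a)
    (hN_nonneg : ∀ a, 0 ≤ N a)
    (x : EuclideanSpace ℝ (Fin n)) (k : ℕ) (hk : 2 ≤ k) (hkm : k ≤ m) :
    (1 / (m.choose k : ℝ)) *
        ∑ A ∈ (Finset.univ : Finset (Fin m)).powersetCard k,
          N ((1 / (k : ℝ)) • ∑ i ∈ A, gradient (F i) x)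
      ≤ (1 / (m.choose (k - 1) : ℝ)) *
          ∑ B ∈ (Finset.univ : Finset (Fin m)).powersetCard (k - 1),
            N ((1 / ((k : ℝ) - 1)) • ∑ i ∈ B, gradient (F i) x) :=
  stmt_5_general n m F N hN_add hN_smul x k hk
end

section
/- For vectors v₁, …, v_m in a normed space and 2 ≤ k ≤ m, the average over all size-k subsets A of ‖(1/k) Σ_{i∈A} vᵢ‖ is at most the average over all size-(k−1) subsets B of ‖(1/(k−1)) Σ_{i∈B} vᵢ‖. -/
/-! Write `S A = ∑ i ∈ A, v i`. For `#A = n + 1`, every `i ∈ A` lies in exactly `n` of the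
`n`-subsets of `A`, so `S A = n⁻¹ • ∑ B, S B` over those subsets, and the triangle inequality
bounds `‖(n + 1)⁻¹ • S A‖` by the average of `‖n⁻¹ • S B‖` over them. Summing over all
`(n + 1)`-subsets `A` counts each `n`-subset `B` exactly `#s - n` times, and
`C(N, n + 1) (n + 1) = C(N, n) (N - n)` turns the resulting sum into the average over `B`. -/

open Finset

namespace Finset

variable {ι M : Type*} [DecidableEq ι] [AddCommMonoid M]

theorem sum_powersetCard_sum_powersetCard (s : Finset ι) (f : Finset ι → M) {n r : ℕ}
    (hrn : r ≤ n) :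
    ∑ A ∈ s.powersetCard n, ∑ B ∈ A.powersetCard r, f B
      = (#s - r).choose (n - r) • ∑ B ∈ s.powersetCard r, f B := by
  rw [sum_comm' (t' := s.powersetCard r) (s' := fun B ↦ {A ∈ s.powersetCard n | B ⊆ A})]
  · rw [smul_sum]
    refine sum_congr rfl fun B hB ↦ ?_
    obtain ⟨hBs, hBr⟩ := mem_powersetCard.1 hB
    rw [sum_const, card_filter_powersetCard_subset B s n hBs (hBr ▸ hrn), hBr]
  · intro A B
    simp only [mem_powersetCard, mem_filter]
    constructor
    · rintro ⟨⟨hAs, hAn⟩, hBA, hBr⟩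
      exact ⟨⟨⟨hAs, hAn⟩, hBA⟩, hBA.trans hAs, hBr⟩
    · rintro ⟨⟨⟨hAs, hAn⟩, hBA⟩, -, hBr⟩
      exact ⟨⟨hAs, hAn⟩, hBA, hBr⟩

theorem sum_powersetCard_sum (A : Finset ι) (f : ι → M) {r : ℕ} (hr : r ≠ 0) :
    ∑ B ∈ A.powersetCard r, ∑ i ∈ B, f i = (#A - 1).choose (r - 1) • ∑ i ∈ A, f i := by
  rw [sum_comm' (t' := A) (s' := fun i ↦ {B ∈ A.powersetCard r | {i} ⊆ B})]
  · rw [smul_sum]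
    refine sum_congr rfl fun i hi ↦ ?_
    rw [sum_const, card_filter_powersetCard_subset {i} A r (singleton_subset_iff.2 hi)
      (by rw [card_singleton]; omega), card_singleton]
  · intro B i
    simp only [mem_powersetCard, mem_filter, singleton_subset_iff]
    constructor
    · rintro ⟨⟨hBA, hBr⟩, hiB⟩
      exact ⟨⟨⟨hBA, hBr⟩, hiB⟩, hBA hiB⟩
    · rintro ⟨⟨⟨hBA, hBr⟩, hiB⟩, -⟩
      exact ⟨⟨hBA, hBr⟩, hiB⟩

end Finset

-- An equality when `n + 1 ≤ N`; otherwise the left side is `0`.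
theorem inv_choose_succ_mul_le (N n : ℕ) :
    ((N.choose (n + 1) : ℝ))⁻¹ * (((N - n : ℕ) : ℝ) / (n + 1)) ≤ ((N.choose n : ℝ))⁻¹ := by
  rcases Nat.eq_zero_or_pos (N.choose (n + 1)) with h | h
  · rw [h, Nat.cast_zero, inv_zero, zero_mul]
    positivity
  have hn : 0 < N.choose n := Nat.choose_pos (by have := Nat.choose_eq_zero_iff.not.1 h.ne'; omega)
  have key : (N.choose (n + 1) : ℝ) * (n + 1) = N.choose n * ((N - n : ℕ) : ℝ) := by
    exact_mod_cast Nat.choose_succ_right_eq N n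
  field_simp
  linarith

section SubsetMeanNorm

variable {ι E : Type*} [NormedAddCommGroup E] [NormedSpace ℝ E]

noncomputable def subsetMeanNorm (s : Finset ι) (v : ι → E) (n : ℕ) : ℝ :=
  ((#s).choose n : ℝ)⁻¹ * ∑ A ∈ s.powersetCard n, ‖(n : ℝ)⁻¹ • ∑ i ∈ A, v i‖

variable [DecidableEq ι]

theorem norm_inv_smul_sum_le_inv_mul_sum_powersetCard (A : Finset ι) (v : ι → E) {n : ℕ}
    (hn : n ≠ 0) (hA : #A = n + 1) :
    ‖((n + 1 : ℕ) : ℝ)⁻¹ • ∑ i ∈ A, v i‖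
      ≤ ((n + 1 : ℕ) : ℝ)⁻¹ * ∑ B ∈ A.powersetCard n, ‖(n : ℝ)⁻¹ • ∑ i ∈ B, v i‖ := by
  have hsum : ∑ i ∈ A, v i = ∑ B ∈ A.powersetCard n, (n : ℝ)⁻¹ • ∑ i ∈ B, v i := by
    rw [← smul_sum, sum_powersetCard_sum A v hn, hA, Nat.add_sub_cancel,
      Nat.choose_symm (Nat.one_le_iff_ne_zero.2 hn), Nat.choose_one_right,
      ← Nat.cast_smul_eq_nsmul ℝ, smul_smul, inv_mul_cancel₀ (Nat.cast_ne_zero.2 hn), one_smul]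
  rw [norm_smul, Real.norm_of_nonneg (by positivity), hsum]
  gcongr
  exact norm_sum_le _ _

theorem subsetMeanNorm_succ_le (s : Finset ι) (v : ι → E) {n : ℕ} (hn : n ≠ 0) :
    subsetMeanNorm s v (n + 1) ≤ subsetMeanNorm s v n := by
  set g : Finset ι → ℝ := fun B ↦ ‖(n : ℝ)⁻¹ • ∑ i ∈ B, v i‖
  have hdouble : ∑ A ∈ s.powersetCard (n + 1), ∑ B ∈ A.powersetCard n, g B
      = ((#s - n : ℕ) : ℝ) * ∑ B ∈ s.powersetCard n, g B := by
    rw [sum_powersetCard_sum_powersetCard s g (Nat.le_add_right n 1), Nat.add_sub_cancel_left,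
      Nat.choose_one_right, nsmul_eq_mul]
  calc subsetMeanNorm s v (n + 1)
      ≤ ((#s).choose (n + 1) : ℝ)⁻¹ *
          ∑ A ∈ s.powersetCard (n + 1), ((n + 1 : ℕ) : ℝ)⁻¹ * ∑ B ∈ A.powersetCard n, g B := by
        unfold subsetMeanNorm
        gcongr with A hA
        exact norm_inv_smul_sum_le_inv_mul_sum_powersetCard A v hn (mem_powersetCard.1 hA).2
    _ = ((#s).choose (n + 1) : ℝ)⁻¹ * (((#s - n : ℕ) : ℝ) / (n + 1)) *
          ∑ B ∈ s.powersetCard n, g B := by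
        rw [← mul_sum, hdouble]
        push_cast
        ring
    _ ≤ subsetMeanNorm s v n :=
        mul_le_mul_of_nonneg_right (inv_choose_succ_mul_le #s n)
          (sum_nonneg fun _ _ ↦ norm_nonneg _)

end SubsetMeanNorm

theorem stmt_7_general (m : ℕ) (E : Type*) [NormedAddCommGroup E] [NormedSpace ℝ E]
    (v : Fin m → E) (k : ℕ) (hk : 2 ≤ k) :
    (1 / (m.choose k : ℝ)) *
        ∑ A ∈ (Finset.univ : Finset (Fin m)).powersetCard k,
          ‖(1 / (k : ℝ)) • ∑ i ∈ A, v i‖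
      ≤ (1 / (m.choose (k - 1) : ℝ)) *
          ∑ B ∈ (Finset.univ : Finset (Fin m)).powersetCard (k - 1),
            ‖(1 / ((k : ℝ) - 1)) • ∑ i ∈ B, v i‖ := by
  obtain ⟨n, rfl⟩ : ∃ n, k = n + 1 := ⟨k - 1, by omega⟩
  have h := subsetMeanNorm_succ_le univ v (n := n) (by omega)
  simpa [subsetMeanNorm, one_div] using h

theorem stmt_7 (m : ℕ) (E : Type*) [NormedAddCommGroup E] [NormedSpace ℝ E]
    (v : Fin m → E) (k : ℕ) (hk : 2 ≤ k) (hkm : k ≤ m) :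
    (1 / (m.choose k : ℝ)) *
        ∑ A ∈ (Finset.univ : Finset (Fin m)).powersetCard k,
          ‖(1 / (k : ℝ)) • ∑ i ∈ A, v i‖
      ≤ (1 / (m.choose (k - 1) : ℝ)) *
          ∑ B ∈ (Finset.univ : Finset (Fin m)).powersetCard (k - 1),
            ‖(1 / ((k : ℝ) - 1)) • ∑ i ∈ B, v i‖ :=
  stmt_7_general m E v k hk
end

section
/- Define f : ℝⁿ → ℝ by f(x) = Σ_{i=1}^n (xᵢ − α/2)². Then f is 2-strongly convex, ∇f is 2-Lipschitz, the unique minimizer is x* = (α/2, …, α/2), and at the lattice point x = 0 one has ‖∇f(0)‖₂ = α√n = (Lα√n)/2 with L = 2, and ‖0 − x*‖₂ = α√n/2 = (Lα√n)/(2μ) with μ = 2. Moreover every point of S = {x ∈ {0, α}ⁿ} satisfies f(x) = nα²/4 = f(0). -/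
open scoped RealInnerProductSpace

/-! The function is `f x = ‖x - x*‖²`, whose gradient is `2 • (x - x*)`. Hence
`∇f x - ∇f y = 2 • (x - y)`, so strong convexity and the Lipschitz bound hold with equality, and
every coordinate of a point of `{0, α}ⁿ` lies at distance `α / 2` from that of `x*`. -/

section SquaredDistance

variable {F : Type*} [NormedAddCommGroup F] [InnerProductSpace ℝ F] [CompleteSpace F]

theorem hasGradientAt_norm_sub_sq (c x : F) :
    HasGradientAt (fun y => ‖y - c‖ ^ 2) ((2 : ℝ) • (x - c)) x := by
  rw [hasGradientAt_iff_hasFDerivAt]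
  refine (hasFDerivAt_sub_const (x := x) c).norm_sq.congr_fderiv ?_
  ext v
  simp [two_smul]

theorem gradient_norm_sub_sq (c x : F) :
    gradient (fun y => ‖y - c‖ ^ 2) x = (2 : ℝ) • (x - c) :=
  (hasGradientAt_norm_sub_sq c x).gradient

theorem gradient_norm_sub_sq_sub (c x y : F) :
    gradient (fun z => ‖z - c‖ ^ 2) x - gradient (fun z => ‖z - c‖ ^ 2) y = (2 : ℝ) • (x - y) := by
  simp only [gradient_norm_sub_sq, ← smul_sub, sub_sub_sub_cancel_right]

end SquaredDistance

namespace EuclideanSpace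

variable {ι : Type*} [Fintype ι]

theorem norm_sub_sq_eq_sum_of_forall_eq (x : EuclideanSpace ℝ ι) {c : EuclideanSpace ℝ ι}
    {a : ℝ} (hc : ∀ i, c i = a) : ‖x - c‖ ^ 2 = ∑ i, (x i - a) ^ 2 := by
  simp [real_norm_sq_eq, hc]

theorem norm_eq_of_forall_eq {c : EuclideanSpace ℝ ι} {a : ℝ} (hc : ∀ i, c i = a) :
    ‖c‖ = |a| * √(Fintype.card ι) := by
  rw [norm_eq, ← Real.sqrt_sq_eq_abs, ← Real.sqrt_mul (sq_nonneg a)]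
  simp [hc, mul_comm]

end EuclideanSpace

theorem sum_sub_half_sq_of_forall_eq_zero_or_eq {ι : Type*} [Fintype ι] {x : ι → ℝ} {α : ℝ}
    (hx : ∀ i, x i = 0 ∨ x i = α) :
    ∑ i, (x i - α / 2) ^ 2 = Fintype.card ι * α ^ 2 / 4 := by
  have hterm : ∀ i, (x i - α / 2) ^ 2 = α ^ 2 / 4 := fun i => by
    rcases hx i with h | h <;> rw [h] <;> ring
  simp [hterm, mul_div_assoc]

theorem stmt_15 (n : ℕ) (α : ℝ) (hα : 0 < α)
    (f : EuclideanSpace ℝ (Fin n) → ℝ)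
    (hf : f = fun x => ∑ i, (x i - α / 2) ^ 2)
    (xstar : EuclideanSpace ℝ (Fin n)) (hxstar : ∀ i, xstar i = α / 2) :
    (∀ x y : EuclideanSpace ℝ (Fin n),
        ⟪gradient f x - gradient f y, x - y⟫ ≥ 2 * ‖x - y‖ ^ 2) ∧
    (∀ x y : EuclideanSpace ℝ (Fin n),
        ‖gradient f x - gradient f y‖ ≤ 2 * ‖x - y‖) ∧
    (∀ x : EuclideanSpace ℝ (Fin n), x ≠ xstar → f xstar < f x) ∧
    ‖gradient f 0‖ = α * Real.sqrt n ∧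
    α * Real.sqrt n = 2 * α * Real.sqrt n / 2 ∧
    ‖(0 : EuclideanSpace ℝ (Fin n)) - xstar‖ = α * Real.sqrt n / 2 ∧
    α * Real.sqrt n / 2 = 2 * α * Real.sqrt n / (2 * 2) ∧
    (∀ x : EuclideanSpace ℝ (Fin n), (∀ i, x i = 0 ∨ x i = α) →
        f x = n * α ^ 2 / 4) ∧
    f 0 = n * α ^ 2 / 4 := by
  have hf_dist : f = fun x => ‖x - xstar‖ ^ 2 := by
    simp only [hf, EuclideanSpace.norm_sub_sq_eq_sum_of_forall_eq _ hxstar]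
  have hlattice : ∀ x : EuclideanSpace ℝ (Fin n), (∀ i, x i = 0 ∨ x i = α) →
      f x = n * α ^ 2 / 4 := fun x hx => by
    simpa [hf] using sum_sub_half_sq_of_forall_eq_zero_or_eq hx
  have hnorm_xstar : ‖xstar‖ = α * √n / 2 := by
    rw [EuclideanSpace.norm_eq_of_forall_eq hxstar, abs_of_pos (half_pos hα), Fintype.card_fin]
    ring
  subst hf_dist
  refine ⟨fun x y => ?_, fun x y => ?_, fun x hx => ?_, ?_, by ring, ?_, by ring, hlattice,
    hlattice 0 fun _ => Or.inl rfl⟩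
  · rw [gradient_norm_sub_sq_sub, real_inner_smul_left, real_inner_self_eq_norm_sq]
  · rw [gradient_norm_sub_sq_sub, norm_smul, Real.norm_two]
  · simpa using pow_pos (norm_pos_iff.2 (sub_ne_zero.2 hx)) 2
  · rw [gradient_norm_sub_sq, zero_sub, norm_smul, norm_neg, hnorm_xstar, Real.norm_two]
    ring
  · rw [zero_sub, norm_neg, hnorm_xstar]
end

section
/- Let f : ℝⁿ → ℝ be μ-strongly convex with minimizer x*, let g = ∇f(x) with ‖g‖_∞ ≤ η and ∇f L-Lipschitz, and let X = x − α Σᵢ sgn(gᵢ)Δᵢ eᶦ with Δᵢ independent Bernoulli, P[Δᵢ=1] = |gᵢ|/η. Then E[‖X − x*‖₂²] ≤ (1 − 2αμ/η)‖x − x*‖₂² + (Lα²√n/η)‖x − x*‖₂. -/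
open scoped RealInnerProductSpace

/-!
The coordinates of the step move independently, so the expected squared distance splits over
coordinates. With `P[Δᵢ = 1] = |gᵢ| / η` the cross term is exactly `-(2α/η) ⟪g, x - x*⟫` and the
quadratic term `(α²/η) ‖g‖₁`. Strong convexity against the critical point `x*` bounds the first,
and `‖g‖₁ ≤ √n ‖g‖₂ ≤ √n L ‖x - x*‖` the second.
-/

theorem IsLocalMin.gradient_eq_zero {E : Type*} [NormedAddCommGroup E] [InnerProductSpace ℝ E]
    [CompleteSpace E] {f : E → ℝ} {a : E} (h : IsLocalMin f a) : gradient f a = 0 := by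
  simp [gradient, h.fderiv_eq_zero]

theorem EuclideanSpace.sum_abs_le_sqrt_card_mul_norm {ι : Type*} [Fintype ι]
    (v : EuclideanSpace ℝ ι) : ∑ i, |v i| ≤ √(Fintype.card ι) * ‖v‖ := by
  rw [← Real.sqrt_sq (norm_nonneg v), ← Real.sqrt_mul (Nat.cast_nonneg _)]
  refine (Real.le_sqrt (by positivity) (by positivity)).2 ?_
  calc (∑ i, |v i|) ^ 2 ≤ Fintype.card ι * ∑ i, |v i| ^ 2 := sq_sum_le_card_mul_sum_sq
    _ = Fintype.card ι * ‖v‖ ^ 2 := by simp [EuclideanSpace.real_norm_sq_eq]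

section Bernoulli

variable {n : ℕ} (p : Fin n → ℝ)

theorem sum_bernWeight_mul_apply (i : Fin n) (h : Bool → ℝ) :
    ∑ s, bernWeight p s * h (s i) = p i * h true + (1 - p i) * h false := by
  -- absorbing `h (s i)` into the `i`-th factor makes the sum over `s` factorise
  have hfactor : ∀ s : Fin n → Bool, bernWeight p s * h (s i) =
      ∏ j, (if s j then p j else 1 - p j) * (if j = i then h (s j) else 1) := by
    intro s
    rw [Finset.prod_mul_distrib, Finset.prod_ite_eq' Finset.univ i, if_pos (Finset.mem_univ i)]
    rfl
  simp only [hfactor]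
  rw [← Fintype.prod_sum (fun j b => (if b then p j else 1 - p j) * (if j = i then h b else 1)),
    Finset.prod_eq_single i (fun j _ hj => by simp [hj]) (by simp)]
  simp

theorem bernExp_sum_apply (h : Fin n → Bool → ℝ) :
    bernExp p (fun s => ∑ i, h i (s i)) = ∑ i, (p i * h i true + (1 - p i) * h i false) := by
  simp only [bernExp, Finset.mul_sum]
  rw [Finset.sum_comm]
  simp only [sum_bernWeight_mul_apply]

end Bernoulli

theorem smgdStep_apply {n : ℕ} (x : EuclideanSpace ℝ (Fin n)) (α : ℝ) (g : Fin n → ℝ)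
    (s : Fin n → Bool) (i : Fin n) :
    smgdStep x α g s i = x i - α * (Real.sign (g i) * if s i then 1 else 0) := by
  simp only [smgdStep, PiLp.sub_apply, PiLp.smul_apply, WithLp.ofLp_sum, Finset.sum_apply,
    PiLp.single_apply, smul_eq_mul, mul_ite, mul_one, mul_zero, Finset.sum_ite_eq, Finset.mem_univ,
    if_true]

theorem abs_div_mul_sub_sign_sq_add (g d α η : ℝ) :
    |g| / η * (d - α * Real.sign g) ^ 2 + (1 - |g| / η) * d ^ 2
      = d ^ 2 - 2 * α / η * (g * d) + α ^ 2 / η * |g| := by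
  rcases lt_trichotomy g 0 with hg | rfl | hg
  · rw [Real.sign_of_neg hg, abs_of_neg hg]; ring
  · simp
  · rw [Real.sign_of_pos hg, abs_of_pos hg]; ring

theorem bernExp_norm_sq_smgdStep_sub {n : ℕ} (x y : EuclideanSpace ℝ (Fin n)) (α η : ℝ)
    (g : Fin n → ℝ) :
    bernExp (fun i => |g i| / η) (fun s => ‖smgdStep x α g s - y‖ ^ 2)
      = ‖x - y‖ ^ 2 - 2 * α / η * ∑ i, g i * (x - y) i + α ^ 2 / η * ∑ i, |g i| := by
  simp only [EuclideanSpace.real_norm_sq_eq, PiLp.sub_apply, smgdStep_apply,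
    sub_right_comm _ _ (y _)]
  rw [bernExp_sum_apply _ fun i b => (x i - y i - α * (Real.sign (g i) * if b then 1 else 0)) ^ 2,
    Finset.mul_sum, Finset.mul_sum, ← Finset.sum_sub_distrib, ← Finset.sum_add_distrib]
  refine Finset.sum_congr rfl fun i _ => ?_
  simpa using abs_div_mul_sub_sign_sq_add (g i) (x i - y i) α η

theorem stmt_16_general (n : ℕ) (f : EuclideanSpace ℝ (Fin n) → ℝ) (μ L α η : ℝ)
    (hα : 0 < α) (hη : 0 < η)
    (hconv : ∀ x y : EuclideanSpace ℝ (Fin n),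
      ⟪gradient f x - gradient f y, x - y⟫ ≥ μ * ‖x - y‖ ^ 2)
    (hlip : ∀ x y : EuclideanSpace ℝ (Fin n), ‖gradient f x - gradient f y‖ ≤ L * ‖x - y‖)
    (xstar : EuclideanSpace ℝ (Fin n)) (hmin : ∀ y, f xstar ≤ f y)
    (x : EuclideanSpace ℝ (Fin n)) (g : Fin n → ℝ) (hgdef : g = fun i => gradient f x i) :
    bernExp (fun i => |g i| / η) (fun s => ‖smgdStep x α g s - xstar‖ ^ 2)
      ≤ (1 - 2 * α * μ / η) * ‖x - xstar‖ ^ 2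
        + (L * α ^ 2 * Real.sqrt n / η) * ‖x - xstar‖ := by
  subst hgdef
  have hcrit : gradient f xstar = 0 := IsLocalMin.gradient_eq_zero (.of_forall hmin)
  have hstrong : μ * ‖x - xstar‖ ^ 2 ≤ ∑ i, gradient f x i * (x - xstar) i := by
    have h := hconv x xstar
    rw [hcrit, sub_zero, PiLp.inner_apply] at h
    simpa only [RCLike.inner_apply', conj_trivial] using h
  have hl1 : ∑ i, |gradient f x i| ≤ √n * (L * ‖x - xstar‖) := by
    calc ∑ i, |gradient f x i| ≤ √n * ‖gradient f x‖ := by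
          simpa using EuclideanSpace.sum_abs_le_sqrt_card_mul_norm (gradient f x)
      _ ≤ √n * (L * ‖x - xstar‖) := by
          gcongr
          simpa [hcrit] using hlip x xstar
  calc _ = ‖x - xstar‖ ^ 2 - 2 * α / η * ∑ i, gradient f x i * (x - xstar) i
        + α ^ 2 / η * ∑ i, |gradient f x i| := bernExp_norm_sq_smgdStep_sub _ _ _ _ _
    _ ≤ ‖x - xstar‖ ^ 2 - 2 * α / η * (μ * ‖x - xstar‖ ^ 2)
        + α ^ 2 / η * (√n * (L * ‖x - xstar‖)) := by gcongr
    _ = _ := by ring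

theorem stmt_16 (n : ℕ) (f : EuclideanSpace ℝ (Fin n) → ℝ) (μ L α η : ℝ)
    (hμ : 0 < μ) (hL : 0 ≤ L) (hα : 0 < α) (hη : 0 < η)
    (hdiff : Differentiable ℝ f)
    (hconv : ∀ x y : EuclideanSpace ℝ (Fin n),
      ⟪gradient f x - gradient f y, x - y⟫ ≥ μ * ‖x - y‖ ^ 2)
    (hlip : ∀ x y : EuclideanSpace ℝ (Fin n), ‖gradient f x - gradient f y‖ ≤ L * ‖x - y‖)
    (xstar : EuclideanSpace ℝ (Fin n)) (hmin : ∀ y, f xstar ≤ f y)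
    (x : EuclideanSpace ℝ (Fin n)) (g : Fin n → ℝ) (hgdef : g = fun i => gradient f x i)
    (hg : ∀ i, |g i| ≤ η) :
    bernExp (fun i => |g i| / η) (fun s => ‖smgdStep x α g s - xstar‖ ^ 2)
      ≤ (1 - 2 * α * μ / η) * ‖x - xstar‖ ^ 2
        + (L * α ^ 2 * Real.sqrt n / η) * ‖x - xstar‖ :=
  stmt_16_general n f μ L α η hα hη hconv hlip xstar hmin x g hgdef
end
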